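/- For all u, v ∈ ℂ with uv ≠ 1, uv ≠ −1 and (uv)⁵ ≠ 1, writing P = (1−u)³(1−v)³, A = [(1−u²v)³(1−uv²)³ − (uv)⁴(1−u)³(1−v)³]/[(1−uv)(1−(uv)²)], B = (1−u)³(1−v)³/(1−uv), C = (1+u)³(1+v)³/(1+uv), the following identity holds: P·[A − (1/2)(B + C)] + P·((uv)⁵−(uv)²)·(uv−1)/((uv)⁵−1) + P·{ [(1/2)(1−u)³(1−v)³ + (1/2)(1+u)³(1+v)³ − 1]·(1+uv+(uv)²) + [(1/2)(1−u)³(1−v)³ − (1/2)(1+u)³(1+v)³]·uv }·(uv−1)/((uv)²−1) + P·((uv)³+(uv)⁴+(uv)⁵)·(uv−1)/((uv)⁵−1) + P·((uv)²+(uv)³+(uv)⁴)·(uv−1)²/[((uv)⁵−1)((uv)²−1)] + P·((uv)²+(uv)³+(uv)⁴)·((uv−1)/((uv)⁵−1))² + P·(uv+(uv)²+(uv)³)·(uv−1)/((uv)⁵−1) + P·(1+uv+(uv)²)·((uv−1)/((uv)⁵−1))² = P·{ A − ((uv)²/2)·(B − C) + (uv)⁵(1+uv+(uv)²)(1+(uv)²)·((uv−1)/((uv)⁵−1))²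 }. -/
import Mathlib
set_option maxHeartbeats 400000000



private lemma Est_aux (P A B C s t w : ℂ) (h1 : w ≠ 1) (h2 : w ≠ -1)
    (h5 : w ^ 5 ≠ 1)
    (hB : B = s / (1 - w)) (hC : C = t / (1 + w)) :
    P * (A - (1 / 2) * (B + C))
    + P * (w ^ 5 - w ^ 2) * (w - 1) / (w ^ 5 - 1)
    + P * (((1 / 2) * s + (1 / 2) * t - 1) * (1 + w + w ^ 2)
        + ((1 / 2) * s - (1 / 2) * t) * w) * (w - 1) / (w ^ 2 - 1)
    + P * (w ^ 3 + w ^ 4 + w ^ 5) * (w - 1) / (w ^ 5 - 1)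
    + P * (w ^ 2 + w ^ 3 + w ^ 4) * (w - 1) ^ 2 / ((w ^ 5 - 1) * (w ^ 2 - 1))
    + P * (w ^ 2 + w ^ 3 + w ^ 4) * ((w - 1) / (w ^ 5 - 1)) ^ 2
    + P * (w + w ^ 2 + w ^ 3) * (w - 1) / (w ^ 5 - 1)
    + P * (1 + w + w ^ 2) * ((w - 1) / (w ^ 5 - 1)) ^ 2
    = P * (A - w ^ 2 / 2 * (B - C)
        + w ^ 5 * (1 + w + w ^ 2) * (1 + w ^ 2) * ((w - 1) / (w ^ 5 - 1)) ^ 2) := by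
  have hm1 : (1 : ℂ) - w ≠ 0 := sub_ne_zero.mpr (fun h => h1 h.symm)
  have hp1 : (1 : ℂ) + w ≠ 0 := fun h => h2 (by linear_combination h)
  have hq2 : w ^ 2 - 1 ≠ 0 := by
    have h : w ^ 2 - 1 = -((1 - w) * (1 + w)) := by ring
    rw [h]; exact neg_ne_zero.mpr (mul_ne_zero hm1 hp1)
  have hq5 : w ^ 5 - 1 ≠ 0 := sub_ne_zero.mpr h5
  have hE : (w ^ 5 - 1) ^ 2 * (w ^ 2 - 1) * (1 - w) * (1 + w) ≠ 0 :=
    mul_ne_zero (mul_ne_zero (mul_ne_zero (pow_ne_zero 2 hq5) hq2) hm1) hp1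
  subst hB hC
  have hB1 : s / (1 - w)
      = s * ((w ^ 5 - 1) ^ 2 * (w ^ 2 - 1) * (1 + w))
        / ((w ^ 5 - 1) ^ 2 * (w ^ 2 - 1) * (1 - w) * (1 + w)) := by
    rw [div_eq_div_iff hm1 hE]; ring
  have hC1 : t / (1 + w)
      = t * ((w ^ 5 - 1) ^ 2 * (w ^ 2 - 1) * (1 - w))
        / ((w ^ 5 - 1) ^ 2 * (w ^ 2 - 1) * (1 - w) * (1 + w)) := by
    rw [div_eq_div_iff hp1 hE]; ring
  have hq1 : (w - 1) / (w ^ 5 - 1)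
      = (w - 1) * ((w ^ 5 - 1) * (w ^ 2 - 1) * (1 - w) * (1 + w))
        / ((w ^ 5 - 1) ^ 2 * (w ^ 2 - 1) * (1 - w) * (1 + w)) := by
    rw [div_eq_div_iff hq5 hE]; ring
  have hq2e : ((w - 1) / (w ^ 5 - 1)) ^ 2
      = (w - 1) ^ 2 * ((w ^ 2 - 1) * (1 - w) * (1 + w))
        / ((w ^ 5 - 1) ^ 2 * (w ^ 2 - 1) * (1 - w) * (1 + w)) := by
    rw [div_pow, div_eq_div_iff (pow_ne_zero 2 hq5) hE]; ring
  have hr1 : (w - 1) / (w ^ 2 - 1)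
      = (w - 1) * ((w ^ 5 - 1) ^ 2 * (1 - w) * (1 + w))
        / ((w ^ 5 - 1) ^ 2 * (w ^ 2 - 1) * (1 - w) * (1 + w)) := by
    rw [div_eq_div_iff hq2 hE]; ring
  have hm1e : (w - 1) ^ 2 / ((w ^ 5 - 1) * (w ^ 2 - 1))
      = (w - 1) ^ 2 * ((w ^ 5 - 1) * (1 - w) * (1 + w))
        / ((w ^ 5 - 1) ^ 2 * (w ^ 2 - 1) * (1 - w) * (1 + w)) := by
    rw [div_eq_div_iff (mul_ne_zero hq5 hq2) hE]; ring
  linear_combination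
    (-(P / 2) + P * w ^ 2 / 2) * hB1
    + (-(P / 2) - P * w ^ 2 / 2) * hC1
    + (P * ((w ^ 5 - w ^ 2) + (w ^ 3 + w ^ 4 + w ^ 5) + (w + w ^ 2 + w ^ 3))) * hq1
    + (P * ((w ^ 2 + w ^ 3 + w ^ 4) + (1 + w + w ^ 2))
        - P * w ^ 5 * (1 + w + w ^ 2) * (1 + w ^ 2)) * hq2e
    + (P * (((1 / 2) * s + (1 / 2) * t - 1) * (1 + w + w ^ 2)
        + ((1 / 2) * s - (1 / 2) * t) * w)) * hr1
    + (P * (w ^ 2 + w ^ 3 + w ^ 4)) * hm1e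

/-- The computation of Remark 7.1, formula (22): the stringy E-function of the
moduli space M of rank 2 semistable bundles of even degree (without fixing
determinant) over a genus 3 Riemann surface is the sum of E(M^s) and the seven
divisor-strata contributions. -/
theorem Est_M_assembly (u v : ℂ) (h1 : u * v ≠ 1) (h2 : u * v ≠ -1)
    (h5 : (u * v) ^ 5 ≠ 1)
    (P A B C : ℂ)
    (hP : P = (1 - u) ^ 3 * (1 - v) ^ 3)
    (hA : A = ((1 - u ^ 2 * v) ^ 3 * (1 - u * v ^ 2) ^ 3
        - (u * v) ^ 4 * (1 - u) ^ 3 * (1 - v) ^ 3)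
      / ((1 - u * v) * (1 - (u * v) ^ 2)))
    (hB : B = (1 - u) ^ 3 * (1 - v) ^ 3 / (1 - u * v))
    (hC : C = (1 + u) ^ 3 * (1 + v) ^ 3 / (1 + u * v)) :
    P * (A - (1 / 2) * (B + C))
    + P * ((u * v) ^ 5 - (u * v) ^ 2) * (u * v - 1) / ((u * v) ^ 5 - 1)
    + P * (((1 / 2) * (1 - u) ^ 3 * (1 - v) ^ 3
          + (1 / 2) * (1 + u) ^ 3 * (1 + v) ^ 3 - 1)
            * (1 + u * v + (u * v) ^ 2)
        + ((1 / 2) * (1 - u) ^ 3 * (1 - v) ^ 3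
            - (1 / 2) * (1 + u) ^ 3 * (1 + v) ^ 3) * (u * v))
        * (u * v - 1) / ((u * v) ^ 2 - 1)
    + P * ((u * v) ^ 3 + (u * v) ^ 4 + (u * v) ^ 5)
        * (u * v - 1) / ((u * v) ^ 5 - 1)
    + P * ((u * v) ^ 2 + (u * v) ^ 3 + (u * v) ^ 4)
        * (u * v - 1) ^ 2 / (((u * v) ^ 5 - 1) * ((u * v) ^ 2 - 1))
    + P * ((u * v) ^ 2 + (u * v) ^ 3 + (u * v) ^ 4)
        * ((u * v - 1) / ((u * v) ^ 5 - 1)) ^ 2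
    + P * (u * v + (u * v) ^ 2 + (u * v) ^ 3)
        * (u * v - 1) / ((u * v) ^ 5 - 1)
    + P * (1 + u * v + (u * v) ^ 2)
        * ((u * v - 1) / ((u * v) ^ 5 - 1)) ^ 2
    = P * (A - (u * v) ^ 2 / 2 * (B - C)
        + (u * v) ^ 5 * (1 + u * v + (u * v) ^ 2) * (1 + (u * v) ^ 2)
            * ((u * v - 1) / ((u * v) ^ 5 - 1)) ^ 2) := by
  have key := Est_aux P A B C ((1 - u) ^ 3 * (1 - v) ^ 3)
    ((1 + u) ^ 3 * (1 + v) ^ 3) (u * v) h1 h2 h5 hB hC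
  linear_combination key
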